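/- Fix a nonzero query matrix Q ∈ ℝ^{d×m} and define, for nonzero X ∈ ℝ^{d×n}, the normalized linear score g(X) = Qᵀ X / (‖Q‖_F · ‖Xᵀ‖_{(∞,2)}) ∈ ℝ^{m×n} and the attention map Att(X) = X · softmax(g(X))ᵀ ∈ ℝ^{d×m}. Then Att is Lipschitz continuous with constant e¹√(m/n) + √8 with respect to the Frobenius norm: for all nonzero X, Y ∈ ℝ^{d×n}, ‖Att(X) − Att(Y)‖_F ≤ (e√(m/n) + √8) ‖X − Y‖_F. -/

import Mathlib

open scoped BigOperators Matrix

/-- Frobenius norm of a real matrix. -/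
noncomputable def frobNorm {α β : Type*} [Fintype α] [Fintype β] (M : Matrix α β ℝ) : ℝ :=
  Real.sqrt (∑ i, ∑ j, (M i j) ^ 2)

/-- Row-wise softmax of a real matrix. -/
noncomputable def softmaxM {α β : Type*} [Fintype α] [Fintype β] (M : Matrix α β ℝ) :
    Matrix α β ℝ :=
  Matrix.of fun i j => Real.exp (M i j) / ∑ k, Real.exp (M i k)

/-- The `(∞,2)`-norm of a matrix: the maximum Euclidean norm of its rows. -/
noncomputable def normInf2 {α β : Type*} [Fintype α] [Fintype β] (M : Matrix α β ℝ) : ℝ :=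
  ⨆ i, Real.sqrt (∑ j, (M i j) ^ 2)

/-- The `(2,∞)`-norm of a matrix: the ℓ2 norm of the vector of row-wise maxima (in abs. value). -/
noncomputable def norm2Inf {α β : Type*} [Fintype α] [Fintype β] (M : Matrix α β ℝ) : ℝ :=
  Real.sqrt (∑ i, (⨆ j, |M i j|) ^ 2)

/-!
Write `P`, `R` for the attention matrices of `X` and `Y`, so that
`Att X - Att Y = (X - Y) Pᵀ + Y (P - R)ᵀ`. By Cauchy–Schwarz every score lies in `[-1, 1]`, so
the rows of `P` are probability vectors with entries at most `e² / n`, and Jensen's inequality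
bounds the first term by `e √(m/n) ‖X - Y‖_F`. For the second, softmax is `1`-Lipschitz from
`ℓ^∞` to `ℓ¹` (along a segment, the mass it puts on a set of indices moves at rate at most `δ / 2`),
and the `i`-th row of scores moves by at most `2 ‖qᵢ‖ D / (‖Q‖_F ‖Yᵀ‖_(∞,2))` in `ℓ^∞`, where
`D = ‖(X - Y)ᵀ‖_(∞,2) ≤ ‖X - Y‖_F`. Summing over `i` gives `‖Y (P - R)ᵀ‖_F ≤ 2 D ≤ √8 ‖X - Y‖_F`.
-/

open Finset WithLp

attribute [local instance] Matrix.frobeniusNormedAddCommGroup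

section Norms

variable {α β : Type*} [Fintype α] [Fintype β]

lemma norm_toLp_eq_sqrt (v : β → ℝ) : ‖toLp 2 v‖ = √(∑ j, v j ^ 2) := by
  simp [EuclideanSpace.norm_eq, sq_abs]

lemma frobNorm_eq_sqrt_sum_norm_row_sq (M : Matrix α β ℝ) :
    frobNorm M = √(∑ i, ‖toLp 2 (M i)‖ ^ 2) := by
  simp only [norm_toLp_eq_sqrt, Real.sq_sqrt (sum_nonneg fun _ _ => sq_nonneg _)]
  rfl

lemma frobNorm_sq_eq_sum_norm_row_sq (M : Matrix α β ℝ) :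
    frobNorm M ^ 2 = ∑ i, ‖toLp 2 (M i)‖ ^ 2 := by
  rw [frobNorm_eq_sqrt_sum_norm_row_sq, Real.sq_sqrt (sum_nonneg fun _ _ => sq_nonneg _)]

lemma frobNorm_eq_norm (M : Matrix α β ℝ) : frobNorm M = ‖M‖ := by
  rw [frobNorm_eq_sqrt_sum_norm_row_sq]
  exact (PiLp.norm_eq_of_L2 (toLp 2 fun i => toLp 2 (M i))).symm

lemma frobNorm_nonneg (M : Matrix α β ℝ) : 0 ≤ frobNorm M := Real.sqrt_nonneg _

lemma frobNorm_transpose (M : Matrix α β ℝ) : frobNorm Mᵀ = frobNorm M := by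
  simp only [frobNorm_eq_norm, Matrix.frobenius_norm_transpose]

lemma frobNorm_add_le (M N : Matrix α β ℝ) : frobNorm (M + N) ≤ frobNorm M + frobNorm N := by
  simpa only [frobNorm_eq_norm] using norm_add_le M N

lemma norm_row_le_frobNorm (M : Matrix α β ℝ) (i : α) : ‖toLp 2 (M i)‖ ≤ frobNorm M := by
  rw [frobNorm_eq_sqrt_sum_norm_row_sq]
  exact Real.le_sqrt_of_sq_le
    (single_le_sum (f := fun i => ‖toLp 2 (M i)‖ ^ 2) (fun _ _ => sq_nonneg _) (mem_univ i))

lemma normInf2_eq_iSup_norm_row (M : Matrix α β ℝ) : normInf2 M = ⨆ i, ‖toLp 2 (M i)‖ := by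
  simp only [norm_toLp_eq_sqrt]
  rfl

lemma normInf2_nonneg (M : Matrix α β ℝ) : 0 ≤ normInf2 M := by
  rw [normInf2_eq_iSup_norm_row]
  exact Real.iSup_nonneg fun _ => norm_nonneg _

lemma norm_row_le_normInf2 (M : Matrix α β ℝ) (i : α) : ‖toLp 2 (M i)‖ ≤ normInf2 M := by
  rw [normInf2_eq_iSup_norm_row]
  exact le_ciSup (Finite.bddAbove_range fun i => ‖toLp 2 (M i)‖) i

lemma normInf2_le {M : Matrix α β ℝ} {C : ℝ} (hC : 0 ≤ C) (h : ∀ i, ‖toLp 2 (M i)‖ ≤ C) :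
    normInf2 M ≤ C := by
  rw [normInf2_eq_iSup_norm_row]
  exact Real.iSup_le h hC

lemma normInf2_le_frobNorm (M : Matrix α β ℝ) : normInf2 M ≤ frobNorm M :=
  normInf2_le (Real.sqrt_nonneg _) (norm_row_le_frobNorm M)

lemma abs_normInf2_sub_normInf2_le (M N : Matrix α β ℝ) :
    |normInf2 M - normInf2 N| ≤ normInf2 (M - N) := by
  have key : ∀ A B : Matrix α β ℝ, (∀ i, ‖toLp 2 (A i)‖ ≤ ‖toLp 2 (B i)‖ + ‖toLp 2 ((M - N) i)‖) →
      normInf2 A ≤ normInf2 B + normInf2 (M - N) := fun A B h =>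
    normInf2_le (add_nonneg (normInf2_nonneg _) (normInf2_nonneg _)) fun i =>
      (h i).trans (add_le_add (norm_row_le_normInf2 B i) (norm_row_le_normInf2 (M - N) i))
  rw [abs_sub_le_iff]
  constructor
  · linarith [key M N fun i => norm_le_norm_add_norm_sub' (toLp 2 (M i)) (toLp 2 (N i))]
  · linarith [key N M fun i => norm_le_norm_add_norm_sub (toLp 2 (M i)) (toLp 2 (N i))]

lemma exists_norm_row_pos {M : Matrix α β ℝ} (h : M ≠ 0) : ∃ i, 0 < ‖toLp 2 (M i)‖ := by
  by_contra! hzero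
  exact h (funext fun i => (by simpa using hzero i : M i = 0))

end Norms

section Softmax

variable {β : Type*} [Fintype β]

noncomputable def softmax (u : β → ℝ) : β → ℝ := fun j => Real.exp (u j) / ∑ k, Real.exp (u k)

lemma softmax_nonneg (u : β → ℝ) (j : β) : 0 ≤ softmax u j := by
  unfold softmax
  positivity

lemma sum_softmax [Nonempty β] (u : β → ℝ) : ∑ j, softmax u j = 1 := by
  simp only [softmax, ← sum_div]
  exact div_self (sum_pos (fun _ _ => Real.exp_pos _) univ_nonempty).ne'

lemma softmax_le_of_abs_le {u : β → ℝ} {a : ℝ} (h : ∀ j, |u j| ≤ a) (j : β) :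
    softmax u j ≤ Real.exp a ^ 2 / Fintype.card β := by
  have hcard : 0 < (Fintype.card β : ℝ) := by
    have : Nonempty β := ⟨j⟩
    exact_mod_cast Fintype.card_pos
  have hnum : Real.exp (u j) ≤ Real.exp a := Real.exp_le_exp.2 (le_of_abs_le (h j))
  have hden : Fintype.card β * Real.exp (-a) ≤ ∑ k, Real.exp (u k) := by
    rw [← nsmul_eq_mul, ← card_univ, ← sum_const]
    exact sum_le_sum fun k _ => Real.exp_le_exp.2 (neg_le_of_abs_le (h k))
  calc softmax u j ≤ Real.exp a / (Fintype.card β * Real.exp (-a)) :=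
        div_le_div₀ (Real.exp_pos a).le hnum (by positivity) hden
    _ = Real.exp a ^ 2 / Fintype.card β := by
        rw [Real.exp_neg]
        field_simp

/-- `(a' * b - a * b') / (a + b) ^ 2` is the derivative of `a / (a + b)`; the bound is AM-GM,
`a * b ≤ (a + b) ^ 2 / 4`. -/
lemma abs_mul_sub_mul_div_add_sq_le {a b a' b' δ : ℝ} (ha : 0 ≤ a) (hb : 0 ≤ b) (hab : 0 < a + b)
    (ha' : |a'| ≤ δ * a) (hb' : |b'| ≤ δ * b) :
    |(a' * b - a * b') / (a + b) ^ 2| ≤ δ / 2 := by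
  have hnum : |a' * b - a * b'| ≤ 2 * δ * (a * b) :=
    calc |a' * b - a * b'| ≤ |a'| * b + a * |b'| := by
          simpa [abs_mul, abs_of_nonneg ha, abs_of_nonneg hb] using abs_sub (a' * b) (a * b')
      _ ≤ δ * a * b + a * (δ * b) := by gcongr
      _ = 2 * δ * (a * b) := by ring
  have hδ : 0 ≤ δ := by
    rcases ha.eq_or_lt with rfl | ha0
    · exact nonneg_of_mul_nonneg_left ((abs_nonneg b').trans hb') (by linarith)
    · exact nonneg_of_mul_nonneg_left ((abs_nonneg a').trans ha') ha0
  rw [abs_div, abs_of_pos (pow_pos hab 2), div_le_iff₀ (pow_pos hab 2)]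
  nlinarith [sq_nonneg (a - b), mul_nonneg hδ (sq_nonneg (a - b))]

lemma sum_softmax_sub_softmax_le [Nonempty β] {u v : β → ℝ} {δ : ℝ} (h : ∀ j, |u j - v j| ≤ δ)
    (s : Finset β) : ∑ j ∈ s, (softmax u j - softmax v j) ≤ δ / 2 := by
  classical
  let F : Finset β → ℝ → ℝ := fun s t => ∑ j ∈ s, Real.exp (v j + t * (u j - v j))
  let F' : Finset β → ℝ → ℝ := fun s t => ∑ j ∈ s, Real.exp (v j + t * (u j - v j)) * (u j - v j)
  have hF_nonneg : ∀ s t, 0 ≤ F s t := fun s t => sum_nonneg fun _ _ => (Real.exp_pos _).le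
  have hF_pos : ∀ t, 0 < F s t + F sᶜ t := fun t => by
    rw [sum_add_sum_compl]
    exact sum_pos (fun _ _ => Real.exp_pos _) univ_nonempty
  have hF' : ∀ s t, |F' s t| ≤ δ * F s t := fun s t => by
    refine (abs_sum_le_sum_abs _ _).trans ?_
    rw [mul_sum]
    refine sum_le_sum fun j _ => ?_
    rw [abs_mul, abs_of_pos (Real.exp_pos _), mul_comm δ]
    exact mul_le_mul_of_nonneg_left (h j) (Real.exp_pos _).le
  have hderiv : ∀ s t, HasDerivAt (F s) (F' s t) t := fun s t =>
    HasDerivAt.fun_sum fun j _ => ((hasDerivAt_mul_const (u j - v j)).const_add (v j)).exp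
  have hφ : ∀ t, HasDerivAt (fun t => F s t / (F s t + F sᶜ t))
      ((F' s t * F sᶜ t - F s t * F' sᶜ t) / (F s t + F sᶜ t) ^ 2) t := fun t =>
    ((hderiv s t).div ((hderiv s t).fun_add (hderiv sᶜ t)) (hF_pos t).ne').congr_deriv (by ring)
  have hsum : ∀ t, ∑ j ∈ s, softmax (fun k => v k + t * (u k - v k)) j
      = F s t / (F s t + F sᶜ t) := fun t => by
    simp only [softmax, ← sum_div, F, sum_add_sum_compl]
  have hmvt := norm_image_sub_le_of_norm_deriv_le_segment_01' (C := δ / 2)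
    (fun t _ => (hφ t).hasDerivWithinAt) (fun t _ => abs_mul_sub_mul_div_add_sq_le
      (hF_nonneg s t) (hF_nonneg sᶜ t) (hF_pos t) (hF' s t) (hF' sᶜ t))
  simp only [← hsum, Real.norm_eq_abs, one_mul, zero_mul, add_zero, add_sub_cancel] at hmvt
  rw [sum_sub_distrib]
  exact le_of_abs_le hmvt

lemma sum_abs_sub_le_of_sum_eq {p q : β → ℝ} {ε : ℝ} (hpq : ∑ j, p j = ∑ j, q j)
    (h : ∀ s : Finset β, ∑ j ∈ s, (p j - q j) ≤ ε) : ∑ j, |p j - q j| ≤ 2 * ε := by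
  classical
  have habs : ∀ x : ℝ, |x| = 2 * max x 0 - x := fun x => by
    rcases le_total 0 x with hx | hx
    · rw [abs_of_nonneg hx, max_eq_left hx]; ring
    · rw [abs_of_nonpos hx, max_eq_right hx]; ring
  have hmax : ∑ j, max (p j - q j) 0 = ∑ j ∈ univ.filter (fun j => q j ≤ p j), (p j - q j) := by
    rw [sum_filter]
    refine sum_congr rfl fun j _ => ?_
    split_ifs with hj
    · exact max_eq_left (sub_nonneg.2 hj)
    · exact max_eq_right (sub_nonpos.2 (le_of_not_ge hj))
  have hzero : ∑ j, (p j - q j) = 0 := by rw [sum_sub_distrib, hpq, sub_self]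
  calc ∑ j, |p j - q j| = 2 * ∑ j, max (p j - q j) 0 - ∑ j, (p j - q j) := by
        simp only [habs, sum_sub_distrib, mul_sum]
    _ ≤ 2 * ε := by
        rw [hzero, sub_zero, hmax]
        linarith [h (univ.filter fun j => q j ≤ p j)]

lemma sum_abs_softmax_sub_softmax_le [Nonempty β] {u v : β → ℝ} {δ : ℝ}
    (h : ∀ j, |u j - v j| ≤ δ) : ∑ j, |softmax u j - softmax v j| ≤ δ := by
  have := sum_abs_sub_le_of_sum_eq (by rw [sum_softmax, sum_softmax])
    (sum_softmax_sub_softmax_le h)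
  linarith

end Softmax

lemma toLp_mul_row {α β γ : Type*} [Fintype β] (B : Matrix γ β ℝ) (M : Matrix β α ℝ) (i : γ) :
    toLp 2 ((B * M) i) = ∑ j, B i j • toLp 2 (M j) := by
  ext k
  simp [Matrix.mul_apply]

section Products

variable {α β γ : Type*} [Fintype α] [Fintype β]

lemma norm_toLp_mul_row_le (B : Matrix γ β ℝ) (M : Matrix β α ℝ) (i : γ) :
    ‖toLp 2 ((B * M) i)‖ ≤ ∑ j, |B i j| * ‖toLp 2 (M j)‖ := by
  rw [toLp_mul_row]
  refine (norm_sum_le _ _).trans (le_of_eq (sum_congr rfl fun j _ => ?_))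
  rw [norm_smul, Real.norm_eq_abs]

lemma frobNorm_mul_le_of_stochastic [Fintype γ] (B : Matrix γ β ℝ) (M : Matrix β α ℝ) {c : ℝ}
    (hB0 : ∀ i j, 0 ≤ B i j) (hB1 : ∀ i, ∑ j, B i j = 1) (hBc : ∀ i j, B i j ≤ c) :
    frobNorm (B * M) ≤ √(Fintype.card γ * c) * frobNorm M := by
  have hrow : ∀ i, ‖toLp 2 ((B * M) i)‖ ^ 2 ≤ ∑ j, B i j * ‖toLp 2 (M j)‖ ^ 2 := fun i =>
    calc ‖toLp 2 ((B * M) i)‖ ^ 2 ≤ (∑ j, B i j * ‖toLp 2 (M j)‖) ^ 2 := by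
          gcongr
          simpa only [abs_of_nonneg (hB0 i _)] using norm_toLp_mul_row_le B M i
      _ ≤ ∑ j, B i j * ‖toLp 2 (M j)‖ ^ 2 :=
          (convexOn_pow 2).map_sum_le (fun j _ => hB0 i j) (hB1 i) fun j _ => norm_nonneg _
  have hsum : ∑ i, ‖toLp 2 ((B * M) i)‖ ^ 2 ≤ Fintype.card γ * c * frobNorm M ^ 2 :=
    calc ∑ i, ‖toLp 2 ((B * M) i)‖ ^ 2 ≤ ∑ _i : γ, ∑ j, c * ‖toLp 2 (M j)‖ ^ 2 :=
          sum_le_sum fun i _ => (hrow i).trans <| sum_le_sum fun j _ => by gcongr; exact hBc i j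
      _ = Fintype.card γ * c * frobNorm M ^ 2 := by
          rw [frobNorm_sq_eq_sum_norm_row_sq, sum_const, card_univ, nsmul_eq_mul, ← mul_sum,
            mul_assoc]
  calc frobNorm (B * M) ≤ √(Fintype.card γ * c * frobNorm M ^ 2) := by
        rw [frobNorm_eq_sqrt_sum_norm_row_sq]
        exact Real.sqrt_le_sqrt hsum
    _ = √(Fintype.card γ * c) * frobNorm M := by
        rw [Real.sqrt_mul' _ (sq_nonneg _), Real.sqrt_sq (frobNorm_nonneg M)]

lemma frobNorm_mul_le_normInf2_mul [Fintype γ] (B : Matrix γ β ℝ) (M : Matrix β α ℝ) {r : γ → ℝ}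
    (hB : ∀ i, ∑ j, |B i j| ≤ r i) : frobNorm (B * M) ≤ normInf2 M * √(∑ i, r i ^ 2) := by
  have hrow : ∀ i, ‖toLp 2 ((B * M) i)‖ ≤ normInf2 M * r i := fun i =>
    calc ‖toLp 2 ((B * M) i)‖ ≤ ∑ j, |B i j| * normInf2 M :=
          (norm_toLp_mul_row_le B M i).trans <|
            sum_le_sum fun j _ => by gcongr; exact norm_row_le_normInf2 M j
      _ ≤ normInf2 M * r i := by
          rw [← sum_mul, mul_comm]
          exact mul_le_mul_of_nonneg_left (hB i) (normInf2_nonneg M)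
  calc frobNorm (B * M) ≤ √(normInf2 M ^ 2 * ∑ i, r i ^ 2) := by
        rw [frobNorm_eq_sqrt_sum_norm_row_sq, mul_sum]
        refine Real.sqrt_le_sqrt (sum_le_sum fun i _ => ?_)
        rw [← mul_pow]
        exact pow_le_pow_left₀ (norm_nonneg _) (hrow i) 2
    _ = normInf2 M * √(∑ i, r i ^ 2) := by
        rw [Real.sqrt_mul' _ (sum_nonneg fun _ _ => sq_nonneg _),
          Real.sqrt_sq (normInf2_nonneg M)]

end Products

lemma norm_inv_smul_sub_inv_smul_le {E : Type*} [SeminormedAddCommGroup E] [NormedSpace ℝ E]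
    {x y : E} {a b : ℝ} (hx : ‖x‖ ≤ a) (hb : 0 < b) :
    ‖a⁻¹ • x - b⁻¹ • y‖ ≤ (‖x - y‖ + |a - b|) / b := by
  have hscale : |a⁻¹ - b⁻¹| * ‖x‖ ≤ |a - b| / b := by
    rcases ((norm_nonneg x).trans hx).eq_or_lt with rfl | ha
    · rw [le_antisymm hx (norm_nonneg x), mul_zero]
      positivity
    · calc |a⁻¹ - b⁻¹| * ‖x‖ ≤ |a⁻¹ - b⁻¹| * a := by gcongr
        _ = |a - b| / b := by
            rw [inv_sub_inv ha.ne' hb.ne', abs_div, abs_mul, abs_of_pos ha, abs_of_pos hb,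
              abs_sub_comm]
            field_simp
  calc ‖a⁻¹ • x - b⁻¹ • y‖ = ‖b⁻¹ • (x - y) + (a⁻¹ - b⁻¹) • x‖ := by congr 1; module
    _ ≤ b⁻¹ * ‖x - y‖ + |a⁻¹ - b⁻¹| * ‖x‖ := by
        refine (norm_add_le _ _).trans_eq ?_
        rw [norm_smul, norm_smul, Real.norm_eq_abs, Real.norm_eq_abs, abs_of_pos (inv_pos.2 hb)]
    _ ≤ (‖x - y‖ + |a - b|) / b := by
        rw [add_div, inv_mul_eq_div]
        gcongr

section Attention

variable {κ γ β α : Type*} [Fintype κ] [Fintype γ] [Fintype β]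

noncomputable def linearScore (Q : Matrix κ γ ℝ) (X : Matrix κ β ℝ) : Matrix γ β ℝ :=
  (frobNorm Q * normInf2 Xᵀ)⁻¹ • (Qᵀ * X)

lemma linearScore_apply (Q : Matrix κ γ ℝ) (X : Matrix κ β ℝ) (i : γ) (j : β) :
    linearScore Q X i j =
      inner ℝ (toLp 2 (Qᵀ i)) ((normInf2 Xᵀ)⁻¹ • toLp 2 (Xᵀ j)) / frobNorm Q := by
  simp only [linearScore, Matrix.smul_apply, Matrix.mul_apply, inner_smul_right, PiLp.inner_apply,
    Matrix.transpose_apply, RCLike.inner_apply, conj_trivial, smul_eq_mul, mul_inv]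
  simp only [mul_comm (X _ j)]
  ring

lemma abs_linearScore_le_one (Q : Matrix κ γ ℝ) (X : Matrix κ β ℝ) (i : γ) (j : β) :
    |linearScore Q X i j| ≤ 1 := by
  rw [linearScore_apply, abs_div, abs_of_nonneg (frobNorm_nonneg Q)]
  refine div_le_one_of_le₀ ?_ (frobNorm_nonneg Q)
  have hx : ‖(normInf2 Xᵀ)⁻¹ • toLp 2 (Xᵀ j)‖ ≤ 1 := by
    rw [norm_smul, Real.norm_eq_abs, abs_inv, abs_of_nonneg (normInf2_nonneg _)]
    exact inv_mul_le_one_of_le₀ (norm_row_le_normInf2 Xᵀ j) (normInf2_nonneg _)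
  calc |inner ℝ (toLp 2 (Qᵀ i)) ((normInf2 Xᵀ)⁻¹ • toLp 2 (Xᵀ j))|
      ≤ ‖toLp 2 (Qᵀ i)‖ * ‖(normInf2 Xᵀ)⁻¹ • toLp 2 (Xᵀ j)‖ := abs_real_inner_le_norm _ _
    _ ≤ frobNorm Q * 1 := by
        refine mul_le_mul ?_ hx (norm_nonneg _) (frobNorm_nonneg Q)
        simpa only [frobNorm_transpose] using norm_row_le_frobNorm Qᵀ i
    _ = frobNorm Q := mul_one _

lemma abs_linearScore_sub_linearScore_le (Q : Matrix κ γ ℝ) (X : Matrix κ β ℝ)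
    {Y : Matrix κ β ℝ} (hY : 0 < normInf2 Yᵀ) (i : γ) (j : β) :
    |linearScore Q X i j - linearScore Q Y i j|
      ≤ 2 * normInf2 (X - Y)ᵀ / normInf2 Yᵀ * (‖toLp 2 (Qᵀ i)‖ / frobNorm Q) := by
  have hdiff : ‖toLp 2 (Xᵀ j) - toLp 2 (Yᵀ j)‖ ≤ normInf2 (X - Y)ᵀ := by
    rw [← WithLp.toLp_sub]
    exact norm_row_le_normInf2 (X - Y)ᵀ j
  have hnorms : |normInf2 Xᵀ - normInf2 Yᵀ| ≤ normInf2 (X - Y)ᵀ := by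
    simpa only [Matrix.transpose_sub] using abs_normInf2_sub_normInf2_le Xᵀ Yᵀ
  have hvec : ‖(normInf2 Xᵀ)⁻¹ • toLp 2 (Xᵀ j) - (normInf2 Yᵀ)⁻¹ • toLp 2 (Yᵀ j)‖
      ≤ 2 * normInf2 (X - Y)ᵀ / normInf2 Yᵀ :=
    (norm_inv_smul_sub_inv_smul_le (norm_row_le_normInf2 Xᵀ j) hY).trans <| by
      rw [two_mul]
      gcongr
  rw [linearScore_apply, linearScore_apply, ← sub_div, ← inner_sub_right, abs_div,
    abs_of_nonneg (frobNorm_nonneg Q), mul_div_assoc', mul_comm]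
  exact div_le_div_of_nonneg_right ((abs_real_inner_le_norm _ _).trans
    (mul_le_mul_of_nonneg_left hvec (norm_nonneg _))) (frobNorm_nonneg Q)

lemma frobNorm_softmax_linearScore_mul_le [Nonempty β] [Fintype α] (Q : Matrix κ γ ℝ)
    (X : Matrix κ β ℝ) (M : Matrix β α ℝ) :
    frobNorm (softmaxM (linearScore Q X) * M)
      ≤ Real.exp 1 * √(Fintype.card γ / Fintype.card β) * frobNorm M := by
  have hbound := frobNorm_mul_le_of_stochastic (softmaxM (linearScore Q X)) M
    (fun i j => softmax_nonneg _ j) (fun i => sum_softmax _)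
    (fun i j => softmax_le_of_abs_le (abs_linearScore_le_one Q X i) j)
  rwa [mul_div_left_comm, Real.sqrt_mul (sq_nonneg _), Real.sqrt_sq (Real.exp_pos 1).le] at hbound

lemma frobNorm_softmax_linearScore_sub_mul_le (Q : Matrix κ γ ℝ) (X : Matrix κ β ℝ)
    {Y : Matrix κ β ℝ} (hY : Y ≠ 0) :
    frobNorm ((softmaxM (linearScore Q X) - softmaxM (linearScore Q Y)) * Yᵀ)
      ≤ 2 * normInf2 (X - Y)ᵀ := by
  obtain ⟨j₀, hj₀⟩ := exists_norm_row_pos (Matrix.transpose_eq_zero.not.2 hY)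
  have : Nonempty β := ⟨j₀⟩
  have hNY : 0 < normInf2 Yᵀ := hj₀.trans_le (norm_row_le_normInf2 Yᵀ j₀)
  set C := 2 * normInf2 (X - Y)ᵀ / normInf2 Yᵀ
  have hC : 0 ≤ C := by have := normInf2_nonneg (X - Y)ᵀ; positivity
  set r : γ → ℝ := fun i => C * (‖toLp 2 (Qᵀ i)‖ / frobNorm Q)
  have hrows : ∀ i, ∑ j, |(softmaxM (linearScore Q X) - softmaxM (linearScore Q Y)) i j| ≤ r i :=
    fun i => sum_abs_softmax_sub_softmax_le (abs_linearScore_sub_linearScore_le Q X hNY i)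
  have hr : ∑ i, r i ^ 2 ≤ C ^ 2 :=
    calc ∑ i, r i ^ 2 = C ^ 2 * (frobNorm Qᵀ ^ 2 / frobNorm Q ^ 2) := by
          simp only [r, mul_pow, div_pow, ← mul_sum, ← sum_div, frobNorm_sq_eq_sum_norm_row_sq]
      _ ≤ C ^ 2 := by
          rw [frobNorm_transpose]
          exact mul_le_of_le_one_right (sq_nonneg C) (div_self_le_one _)
  calc frobNorm ((softmaxM (linearScore Q X) - softmaxM (linearScore Q Y)) * Yᵀ)
      ≤ normInf2 Yᵀ * √(∑ i, r i ^ 2) := frobNorm_mul_le_normInf2_mul _ _ hrows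
    _ ≤ normInf2 Yᵀ * C := by
        gcongr
        exact Real.sqrt_le_left hC |>.2 hr
    _ = 2 * normInf2 (X - Y)ᵀ := mul_div_cancel₀ _ hNY.ne'

end Attention

theorem attention_lipschitz_linear_score_general {d n m : ℕ}
    (Q : Matrix (Fin d) (Fin m) ℝ) :
    ∀ X Y : Matrix (Fin d) (Fin n) ℝ, X ≠ 0 → Y ≠ 0 →
      frobNorm
          (X * (softmaxM ((frobNorm Q * normInf2 Xᵀ)⁻¹ • (Qᵀ * X)))ᵀ -
           Y * (softmaxM ((frobNorm Q * normInf2 Yᵀ)⁻¹ • (Qᵀ * Y)))ᵀ) ≤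
        (Real.exp 1 * Real.sqrt ((m : ℝ) / n) + Real.sqrt 8) * frobNorm (X - Y) := by
  intro X Y _ hY
  obtain ⟨j₀, -⟩ := exists_norm_row_pos (Matrix.transpose_eq_zero.not.2 hY)
  have : Nonempty (Fin n) := ⟨j₀⟩
  set P := softmaxM (linearScore Q X)
  set R := softmaxM (linearScore Q Y)
  have hsplit : X * Pᵀ - Y * Rᵀ = (P * (X - Y)ᵀ + (P - R) * Yᵀ)ᵀ := by
    simp only [Matrix.transpose_add, Matrix.transpose_mul, Matrix.transpose_transpose,
      Matrix.transpose_sub, Matrix.mul_sub, Matrix.sub_mul]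
    abel
  have hfirst : frobNorm (P * (X - Y)ᵀ) ≤ Real.exp 1 * √(m / n) * frobNorm (X - Y) := by
    simpa only [Fintype.card_fin, frobNorm_transpose]
      using frobNorm_softmax_linearScore_mul_le Q X (X - Y)ᵀ
  have hsecond : frobNorm ((P - R) * Yᵀ) ≤ 2 * frobNorm (X - Y) :=
    (frobNorm_softmax_linearScore_sub_mul_le Q X hY).trans <| by
      gcongr
      simpa only [frobNorm_transpose] using normInf2_le_frobNorm (X - Y)ᵀ
  have hsqrt8 : (2 : ℝ) ≤ √8 := Real.le_sqrt_of_sq_le (by norm_num)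
  calc frobNorm (X * Pᵀ - Y * Rᵀ)
      ≤ frobNorm (P * (X - Y)ᵀ) + frobNorm ((P - R) * Yᵀ) := by
        rw [hsplit, frobNorm_transpose]
        exact frobNorm_add_le _ _
    _ ≤ (Real.exp 1 * √(m / n) + √8) * frobNorm (X - Y) := by
        nlinarith [frobNorm_nonneg (X - Y)]

/-- **LipschitzNorm, linear score, α = 1.** Fix a nonzero query matrix
`Q ∈ ℝ^{d×m}` and, for nonzero `X`, set `g(X) = Qᵀ X / (‖Q‖_F ⬝ ‖Xᵀ‖_{(∞,2)})` and
`Att(X) = X ⬝ softmax(g(X))ᵀ`.  Then for all nonzero `X, Y`,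
`‖Att(X) − Att(Y)‖_F ≤ (e √(m/n) + √8) ‖X − Y‖_F`. -/
theorem attention_lipschitz_linear_score {d n m : ℕ}
    (Q : Matrix (Fin d) (Fin m) ℝ) (hQ : Q ≠ 0) :
    ∀ X Y : Matrix (Fin d) (Fin n) ℝ, X ≠ 0 → Y ≠ 0 →
      frobNorm
          (X * (softmaxM ((frobNorm Q * normInf2 Xᵀ)⁻¹ • (Qᵀ * X)))ᵀ -
           Y * (softmaxM ((frobNorm Q * normInf2 Yᵀ)⁻¹ • (Qᵀ * Y)))ᵀ) ≤
        (Real.exp 1 * Real.sqrt ((m : ℝ) / n) + Real.sqrt 8) * frobNorm (X - Y) :=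
  attention_lipschitz_linear_score_general Q
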